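/- For all nonnegative integers t and n, d(4t+1, 4n+3) = d(2t+1, 2n+1) − 1, where d(t,n) = r(n+t) − r(n) and r counts overlapping occurrences of the block 11 in binary. -/

import Mathlib

/-- `r n` counts indices `j ≥ 0` with the `j`-th and `(j+1)`-st binary digits of `n` both `1`. -/
def r (n : ℕ) : ℕ :=
  ((Finset.range (n + 1)).filter (fun j => n.testBit j ∧ n.testBit (j + 1))).card

/-- `d t n = r (n + t) - r n` as an integer. -/
def d (t n : ℕ) : ℤ := (r (n + t) : ℤ) - (r n : ℤ)

/-!
Appending a binary digit `b` to `m` creates a new block `11` exactly when `b = 1` and `m` is odd: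
`r (2m) = r m` and `r (2m+1) = r m + m % 2`. Both `(4n+3) + (4t+1)` and `(2n+1) + (2t+1)` are
obtained from `n + t + 1` by appending zeros, so they have the same `r`, while `r (4n+3)` exceeds
`r (2n+1)` by one.
-/

open Finset

theorem r_eq_card_filter_range {n N : ℕ} (h : n < N) :
    r n = #{j ∈ range N | n.testBit j ∧ n.testBit (j + 1)} := by
  unfold r
  congr 1
  ext j
  simp only [mem_filter, mem_range, and_congr_left_iff]
  rintro ⟨hj, -⟩
  have : j < n + 1 := by
    by_contra! hle
    rw [Nat.testBit_lt_two_pow (by grind [Nat.lt_two_pow_self])] at hj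
    contradiction
  omega

theorem r_eq_r_div_two_add (n : ℕ) :
    r n = r (n / 2) + if n.testBit 0 ∧ n.testBit 1 then 1 else 0 := by
  rw [r_eq_card_filter_range (N := n + 2) (by omega),
    r_eq_card_filter_range (n := n / 2) (N := n + 1) (by omega),
    card_filter, card_filter, sum_range_succ']
  simp only [Nat.testBit_succ]

theorem r_two_mul (m : ℕ) : r (2 * m) = r m := by
  simp [r_eq_r_div_two_add (2 * m)]

theorem r_two_mul_add_one (m : ℕ) : r (2 * m + 1) = r m + m % 2 := by
  rw [r_eq_r_div_two_add, show (2 * m + 1) / 2 = m by omega]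
  simp only [Nat.testBit_zero, Nat.testBit_succ, Nat.mul_add_mod_self_left, Nat.mod_succ,
    decide_true, decide_eq_true_eq, true_and, Nat.add_left_cancel_iff]
  split <;> omega

theorem d_rec (t n : ℕ) : d (4 * t + 1) (4 * n + 3) = d (2 * t + 1) (2 * n + 1) - 1 := by
  have h_sum_big : 4 * n + 3 + (4 * t + 1) = 2 * (2 * (n + t + 1)) := by ring
  have h_sum_small : 2 * n + 1 + (2 * t + 1) = 2 * (n + t + 1) := by ring
  have h_big : r (4 * n + 3) = r (2 * n + 1) + 1 := by
    rw [show 4 * n + 3 = 2 * (2 * n + 1) + 1 by ring, r_two_mul_add_one]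
    omega
  simp only [d, h_sum_big, h_sum_small, r_two_mul, h_big]
  push_cast
  ring
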